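/- For t > 0 and x_1(t) = arcosh((3e^{2t} − 1)/2), the curve x(t) = (x_1(t), 0, −x_1(t)) solves the N = 3 system dx_j/dt = Σ_{l≠j} coth((x_j − x_l)/2), j = 1,2,3, and extends continuously to [0,∞) with x(0) = (0,0,0). -/

import Mathlib

/-- The inverse hyperbolic cosine. -/
noncomputable def arcosh (x : ℝ) : ℝ := Real.log (x + Real.sqrt (x ^ 2 - 1))

/-- The hyperbolic cotangent. -/
noncomputable def coth (x : ℝ) : ℝ := Real.cosh x / Real.sinh x

/-!
Put `y = (3e^{2t} − 1)/2` and `a = x₁(t) = arcosh y`. The half-angle formulas give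
`coth (a/2) + coth a = (2 cosh a + 1) / sinh a = (2y + 1) / sinh a`, while differentiating
`cosh a = y` gives `a' = y' / sinh a`; the two agree because `y' = 2y + 1`. This is the equation
for `x₁`; the equations for `x₂ = 0` and `x₃ = −x₁` follow from the oddness of `coth`.
-/

lemma arcosh_eq_real_arcosh : arcosh = Real.arcosh := rfl

lemma coth_neg (x : ℝ) : coth (-x) = -coth x := by
  simp [coth, div_neg]

lemma coth_half_add_coth {a : ℝ} (ha : a ≠ 0) :
    coth (a / 2) + coth a = (2 * Real.cosh a + 1) / Real.sinh a := by
  have hs : Real.sinh (a / 2) ≠ 0 := Real.sinh_ne_zero.2 (by simpa using ha)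
  have hc : Real.cosh (a / 2) ≠ 0 := (Real.cosh_pos _).ne'
  have hsinh : Real.sinh a = 2 * Real.sinh (a / 2) * Real.cosh (a / 2) := by
    rw [← Real.sinh_two_mul, mul_div_cancel₀ a two_ne_zero]
  have hcosh : Real.cosh a = 2 * Real.cosh (a / 2) ^ 2 - 1 := by
    rw [← mul_div_cancel₀ a two_ne_zero, Real.cosh_two_mul, mul_div_cancel₀ a two_ne_zero,
      Real.cosh_sq (a / 2)]
    ring
  rw [coth, coth, hsinh, hcosh]
  field_simp
  ring

lemma one_le_three_mul_exp_sub_one_div_two {t : ℝ} (ht : 0 ≤ t) :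
    1 ≤ (3 * Real.exp (2 * t) - 1) / 2 := by
  linarith [Real.one_le_exp (by linarith : 0 ≤ 2 * t)]

lemma one_lt_three_mul_exp_sub_one_div_two {t : ℝ} (ht : 0 < t) :
    1 < (3 * Real.exp (2 * t) - 1) / 2 := by
  linarith [Real.one_lt_exp_iff.2 (by linarith : 0 < 2 * t)]

lemma hasDerivAt_three_mul_exp_sub_one_div_two (t : ℝ) :
    HasDerivAt (fun t ↦ (3 * Real.exp (2 * t) - 1) / 2)
      (2 * ((3 * Real.exp (2 * t) - 1) / 2) + 1) t := by
  refine ((((hasDerivAt_id t).const_mul 2).exp.const_mul 3).sub_const 1).div_const 2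
    |>.congr_deriv ?_
  simp only [id, mul_one]
  ring

lemma hasDerivAt_arcosh_comp_eq_coth_add_coth {y : ℝ → ℝ} {t : ℝ}
    (hy : HasDerivAt y (2 * y t + 1) t) (h1 : 1 < y t) :
    HasDerivAt (fun s ↦ Real.arcosh (y s))
      (coth (Real.arcosh (y t) / 2) + coth (Real.arcosh (y t))) t := by
  refine ((Real.hasDerivAt_arcosh h1).comp t hy).congr_deriv ?_
  rw [coth_half_add_coth (Real.arcosh_pos h1).ne', Real.cosh_arcosh h1.le,
    Real.sinh_arcosh h1.le]
  ring

/-- For `N = 3`, the curve `t ↦ (x₁(t), 0, −x₁(t))` with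
`x₁(t) = arcosh((3e^{2t} − 1)/2)` solves `dx_j/dt = Σ_{l≠j} coth((x_j − x_l)/2)`
for `t > 0`, is continuous on `[0,∞)` and starts at `(0,0,0)`. -/
theorem solution_ode_noncompact_A_N3
    (x₁ x₂ x₃ : ℝ → ℝ) (h₁ : ∀ t, x₁ t = arcosh ((3 * Real.exp (2 * t) - 1) / 2))
    (h₂ : ∀ t, x₂ t = 0) (h₃ : ∀ t, x₃ t = - x₁ t) :
    (∀ t > 0,
        HasDerivAt x₁ (coth ((x₁ t - x₂ t) / 2) + coth ((x₁ t - x₃ t) / 2)) t ∧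
        HasDerivAt x₂ (coth ((x₂ t - x₁ t) / 2) + coth ((x₂ t - x₃ t) / 2)) t ∧
        HasDerivAt x₃ (coth ((x₃ t - x₁ t) / 2) + coth ((x₃ t - x₂ t) / 2)) t) ∧
    ContinuousOn x₁ (Set.Ici 0) ∧ ContinuousOn x₃ (Set.Ici 0) ∧
    x₁ 0 = 0 ∧ x₂ 0 = 0 ∧ x₃ 0 = 0 := by
  simp only [arcosh_eq_real_arcosh] at h₁
  obtain rfl : x₁ = fun t ↦ Real.arcosh ((3 * Real.exp (2 * t) - 1) / 2) := funext h₁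
  obtain rfl : x₂ = fun _ ↦ 0 := funext h₂
  obtain rfl : x₃ = fun t ↦ -Real.arcosh ((3 * Real.exp (2 * t) - 1) / 2) := funext h₃
  have hcont : ContinuousOn (fun t ↦ Real.arcosh ((3 * Real.exp (2 * t) - 1) / 2)) (Set.Ici 0) :=
    Real.continuousOn_arcosh.comp (by fun_prop) fun t ht ↦ one_le_three_mul_exp_sub_one_div_two ht
  have hzero : Real.arcosh ((3 * Real.exp (2 * 0) - 1) / 2) = 0 := by norm_num
  refine ⟨fun t ht ↦ ?_, hcont, hcont.neg, hzero, rfl, neg_eq_zero.2 hzero⟩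
  have hd := hasDerivAt_arcosh_comp_eq_coth_add_coth
    (hasDerivAt_three_mul_exp_sub_one_div_two t) (one_lt_three_mul_exp_sub_one_div_two ht)
  set a := Real.arcosh ((3 * Real.exp (2 * t) - 1) / 2)
  refine ⟨?_, ?_, ?_⟩
  · simpa [sub_neg_eq_add, ← two_mul] using hd
  · refine (hasDerivAt_const t (0 : ℝ)).congr_deriv ?_
    rw [zero_sub, neg_div, coth_neg, sub_neg_eq_add, zero_add, neg_add_cancel]
  · refine hd.neg.congr_deriv ?_
    rw [show (-a - a) / 2 = -a by ring, show (-a - 0) / 2 = -(a / 2) by ring, coth_neg, coth_neg]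
    ring
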